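/- A sos form f of degree 2d is strictly sos (i.e., lies in the interior of the cone Σ_{2d}) if and only if U_f = R[x]_d. -/

import Mathlib

open MvPolynomial Finsupp

/-- `f` is a sum of squares of forms of degree `d` in `n` variables. -/
def IsSOSForm (n d : ℕ) (f : MvPolynomial (Fin n) ℝ) : Prop :=
  ∃ (N : ℕ) (g : Fin N → MvPolynomial (Fin n) ℝ),
    (∀ i, (g i).IsHomogeneous d) ∧ f = ∑ i, (g i) ^ 2

/-- The cone `Σ_{2d}` of sums of squares of degree-`d` forms, as a subset of the
finite-dimensional real vector space `R[x]_{2d}` of forms of degree `2d`. -/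
def SigmaCone (n d : ℕ) : Set (homogeneousSubmodule (Fin n) ℝ (2 * d)) :=
  {f | IsSOSForm n d (f : MvPolynomial (Fin n) ℝ)}

/-- The canonical topology on the finite-dimensional real vector space of forms. -/
noncomputable instance (n d : ℕ) : TopologicalSpace (homogeneousSubmodule (Fin n) ℝ d) :=
  moduleTopology ℝ _

/-- A form is positive definite if it is positive away from the origin. -/
def PosDefForm (n : ℕ) (f : MvPolynomial (Fin n) ℝ) : Prop :=
  ∀ x : Fin n → ℝ, x ≠ 0 → 0 < eval x f

/-- For a sos form `f` of degree `2d`, the set `U_f` of forms `p` of degree `d`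
such that `f - c p ^ 2` is sos for some `c > 0`. -/
def Uset (n d : ℕ) (f : MvPolynomial (Fin n) ℝ) : Set (MvPolynomial (Fin n) ℝ) :=
  {p | p.IsHomogeneous d ∧ ∃ c : ℝ, 0 < c ∧ IsSOSForm n d (f - c • p ^ 2)}

open Filter Topology Pointwise

/-! If `f` is interior to `Σ_{2d}`, then by continuity `f - c p²` stays in the cone for small
`c > 0`. Conversely, the set of `q` with `f - c q ∈ Σ_{2d}` for some `c > 0` is closed under
addition (a convex combination of `f - c₁ q₁` and `f - c₂ q₂` is `f - c (q₁ + q₂)`), so if it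
contains all squares it contains every sos form. By polarization the squares span the space of
forms of degree `2d`, so `Σ_{2d}` has an interior point `b`; then `f = c b + (f - c b)` is an
interior point plus a point of the cone, hence interior. -/

section ConvexAlgebra

variable {𝕜 E : Type*} [Field 𝕜] [LinearOrder 𝕜] [IsStrictOrderedRing 𝕜] [AddCommGroup E]
  [Module 𝕜 E] {s : Set E} {x : E}

theorem Convex.exists_pos_sub_smul_add_mem (hs : Convex 𝕜 s) {q₁ q₂ : E}
    (h₁ : ∃ c : 𝕜, 0 < c ∧ x - c • q₁ ∈ s) (h₂ : ∃ c : 𝕜, 0 < c ∧ x - c • q₂ ∈ s) :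
    ∃ c : 𝕜, 0 < c ∧ x - c • (q₁ + q₂) ∈ s := by
  obtain ⟨c₁, hc₁, hx₁⟩ := h₁
  obtain ⟨c₂, hc₂, hx₂⟩ := h₂
  have hc : 0 < c₁ + c₂ := add_pos hc₁ hc₂
  refine ⟨c₁ * c₂ / (c₁ + c₂), by positivity, ?_⟩
  convert hs hx₁ hx₂ (div_pos hc₂ hc).le (div_pos hc₁ hc).le
    (by rw [← add_div, add_comm, div_self hc.ne']) using 1
  match_scalars
  · field_simp
    ring
  · field_simp
  · field_simp

theorem Convex.exists_pos_sub_smul_sum_mem {ι : Type*} (hs : Convex 𝕜 s) (hx : x ∈ s)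
    (t : Finset ι) (q : ι → E) (h : ∀ i ∈ t, ∃ c : 𝕜, 0 < c ∧ x - c • q i ∈ s) :
    ∃ c : 𝕜, 0 < c ∧ x - c • ∑ i ∈ t, q i ∈ s :=
  Finset.sum_induction q (fun v => ∃ c : 𝕜, 0 < c ∧ x - c • v ∈ s)
    (fun _ _ => hs.exists_pos_sub_smul_add_mem) ⟨1, one_pos, by simpa using hx⟩ h

end ConvexAlgebra

section Topology

variable {E : Type*} [AddCommGroup E] [Module ℝ E] [TopologicalSpace E]

theorem exists_pos_sub_smul_mem_of_mem_interior [ContinuousSub E] [ContinuousSMul ℝ E]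
    {s : Set E} {x : E} (hx : x ∈ interior s) (q : E) : ∃ c : ℝ, 0 < c ∧ x - c • q ∈ s := by
  have hlim : Tendsto (fun c : ℝ => x - c • q) (𝓝[>] 0) (𝓝 x) := by
    have : Continuous fun c : ℝ => x - c • q := by fun_prop
    simpa using (this.tendsto 0).mono_left nhdsWithin_le_nhds
  obtain ⟨c, hc, hcs⟩ := ((hlim.eventually (mem_interior_iff_mem_nhds.mp hx)).and
    self_mem_nhdsWithin).exists
  exact ⟨c, hcs, hc⟩

namespace ConvexCone

variable (K : ConvexCone ℝ E)

theorem add_mem_interior [ContinuousAdd E] {x y : E} (hx : x ∈ interior K) (hy : y ∈ K) :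
    x + y ∈ interior K :=
  interior_maximal (by rintro _ ⟨z, hz, w, rfl, rfl⟩; exact K.add_mem (interior_subset hz) hy)
    isOpen_interior.add_right ⟨x, hx, y, rfl, rfl⟩

theorem smul_mem_interior [ContinuousConstSMul ℝ E] {c : ℝ} (hc : 0 < c) {x : E}
    (hx : x ∈ interior K) : c • x ∈ interior K := by
  have : c • interior (K : Set E) ⊆ interior K := by
    rw [← interior_smul₀ hc.ne']
    exact interior_mono (Set.smul_set_subset_iff.2 fun y hy => K.smul_mem hc hy)
  exact this (Set.smul_mem_smul_set hx)

theorem mem_interior_of_exists_pos_sub_smul_mem [ContinuousAdd E] [ContinuousConstSMul ℝ E]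
    {b x : E} (hb : b ∈ interior K) (h : ∃ c : ℝ, 0 < c ∧ x - c • b ∈ K) : x ∈ interior K := by
  obtain ⟨c, hc, hxc⟩ := h
  simpa using K.add_mem_interior (K.smul_mem_interior hc hb) hxc

end ConvexCone

theorem Convex.interior_nonempty_of_zero_mem_of_span_eq_top [IsModuleTopology ℝ E]
    [FiniteDimensional ℝ E] {s : Set E} (hs : Convex ℝ s) (h0 : 0 ∈ s)
    (hspan : Submodule.span ℝ s = ⊤) : (interior s).Nonempty := by
  have := IsModuleTopology.toContinuousAdd ℝ E
  let e : E ≃L[ℝ] (Fin (Module.finrank ℝ E) → ℝ) :=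
    { (Module.finBasis ℝ E).equivFun with
      continuous_toFun := IsModuleTopology.continuous_of_linearMap _
      continuous_invFun :=
        IsModuleTopology.continuous_of_linearMap (Module.finBasis ℝ E).equivFun.symm.toLinearMap }
  have hspan' : Submodule.span ℝ (e '' s) = ⊤ := by
    rw [← e.coe_toLinearEquiv, ← LinearEquiv.coe_toLinearMap, Submodule.span_image, hspan,
      Submodule.map_top, LinearMap.range_eq_top]
    exact e.surjective
  have haff : affineSpan ℝ (e '' s) = ⊤ := by
    have he0 : (0 : Fin (Module.finrank ℝ E) → ℝ) ∈ e '' s := ⟨0, h0, map_zero e⟩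
    rw [AffineSubspace.affineSpan_eq_top_iff_vectorSpan_eq_top_of_nonempty ℝ _ _ ⟨0, he0⟩,
      vectorSpan_eq_span_vsub_set_right ℝ he0]
    simpa using hspan'
  have hconv : Convex ℝ (e '' s) := hs.linear_image e.toLinearMap
  rw [← hconv.interior_nonempty_iff_affineSpan_eq_top, ← e.coe_toHomeomorph,
    ← e.toHomeomorph.image_interior] at haff
  exact haff.of_image

end Topology

namespace MvPolynomial

variable {σ : Type*}

theorem IsHomogeneous.sq {R : Type*} [CommSemiring R] {p : MvPolynomial σ R} {d : ℕ}
    (hp : p.IsHomogeneous d) : (p ^ 2).IsHomogeneous (2 * d) := by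
  simpa [mul_comm] using hp.pow 2

theorem homogeneousSubmodule_two_mul_le_span_sq {K : Type*} [Field K] [NeZero (2 : K)] (d : ℕ) :
    homogeneousSubmodule σ K (2 * d) ≤
      Submodule.span K ((· ^ 2) '' {p : MvPolynomial σ K | p.IsHomogeneous d}) := by
  rw [two_mul, ← homogeneousSubmodule_one_pow, pow_add, homogeneousSubmodule_one_pow,
    Submodule.mul_le]
  intro p hp q hq
  have h4 : (4 : K) ≠ 0 := by
    simpa [show (4 : K) = 2 * 2 by norm_num] using NeZero.ne (2 : K)
  have hpolar : (p + q) ^ 2 - (p - q) ^ 2 = (4 : K) • (p * q) := by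
    rw [smul_eq_C_mul]
    simp only [map_ofNat]
    ring
  rw [← inv_smul_smul₀ h4 (p * q), ← hpolar]
  exact Submodule.smul_mem _ _ (Submodule.sub_mem _
    (Submodule.subset_span ⟨p + q, IsHomogeneous.add hp hq, rfl⟩)
    (Submodule.subset_span ⟨p - q, IsHomogeneous.sub hp hq, rfl⟩))

instance {K : Type*} [Field K] [Finite σ] (d : ℕ) :
    FiniteDimensional K (homogeneousSubmodule σ K d) :=
  Module.Finite.iff_fg.mpr (homogeneousSubmodule_fg σ K d)

end MvPolynomial

instance (n d : ℕ) : IsModuleTopology ℝ (homogeneousSubmodule (Fin n) ℝ d) := ⟨rfl⟩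

instance (n d : ℕ) : IsTopologicalAddGroup (homogeneousSubmodule (Fin n) ℝ d) :=
  IsModuleTopology.topologicalAddGroup ℝ _

namespace IsSOSForm

variable {n d : ℕ} {f g : MvPolynomial (Fin n) ℝ}

theorem add (hf : IsSOSForm n d f) (hg : IsSOSForm n d g) : IsSOSForm n d (f + g) := by
  obtain ⟨N, a, ha, rfl⟩ := hf
  obtain ⟨M, b, hb, rfl⟩ := hg
  refine ⟨N + M, Fin.append a b, Fin.addCases (by simpa using ha) (by simpa using hb), ?_⟩
  simp [Fin.sum_univ_add]

theorem smul {c : ℝ} (hc : 0 ≤ c) (hf : IsSOSForm n d f) : IsSOSForm n d (c • f) := by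
  obtain ⟨N, a, ha, rfl⟩ := hf
  refine ⟨N, fun i => √c • a i, fun i => (homogeneousSubmodule _ ℝ d).smul_mem _ (ha i), ?_⟩
  simp only [Finset.smul_sum, smul_pow, Real.sq_sqrt hc]

end IsSOSForm

def sosCone (n d : ℕ) : ConvexCone ℝ (homogeneousSubmodule (Fin n) ℝ (2 * d)) where
  carrier := SigmaCone n d
  smul_mem' _ hc _ hf := IsSOSForm.smul hc.le hf
  add_mem' _ hf _ hg := IsSOSForm.add hf hg

theorem span_sigmaCone_eq_top (n d : ℕ) : Submodule.span ℝ (SigmaCone n d) = ⊤ := by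
  refine Submodule.eq_top_iff'.2 fun f => ?_
  have hf : (f : MvPolynomial (Fin n) ℝ) ∈
      Submodule.span ℝ ((homogeneousSubmodule (Fin n) ℝ (2 * d)).subtype '' SigmaCone n d) := by
    refine Submodule.span_mono ?_ (homogeneousSubmodule_two_mul_le_span_sq d f.2)
    rintro _ ⟨p, hp, rfl⟩
    exact ⟨⟨p ^ 2, hp.sq⟩, ⟨1, fun _ => p, fun _ => hp, by simp⟩, rfl⟩
  rw [Submodule.span_image] at hf
  obtain ⟨g, hg, hgf⟩ := hf
  rwa [← Subtype.ext hgf]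

theorem interior_sigmaCone_nonempty (n d : ℕ) : (interior (SigmaCone n d)).Nonempty :=
  (sosCone n d).convex.interior_nonempty_of_zero_mem_of_span_eq_top
    ⟨0, Fin.elim0, fun i => i.elim0, by simp⟩ (span_sigmaCone_eq_top n d)

theorem mem_Uset_iff {n d : ℕ} {f p : MvPolynomial (Fin n) ℝ}
    (hf : f ∈ homogeneousSubmodule (Fin n) ℝ (2 * d)) (hp : p.IsHomogeneous d) :
    p ∈ Uset n d f ↔ ∃ c : ℝ, 0 < c ∧
      (⟨f, hf⟩ - c • ⟨p ^ 2, hp.sq⟩ : homogeneousSubmodule (Fin n) ℝ (2 * d)) ∈ SigmaCone n d :=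
  and_iff_right hp

theorem strictly_sos_iff_Uset_eq_general (n d : ℕ) (f : MvPolynomial (Fin n) ℝ)
    (hf : f ∈ homogeneousSubmodule (Fin n) ℝ (2 * d)) :
    (⟨f, hf⟩ : homogeneousSubmodule (Fin n) ℝ (2 * d)) ∈ interior (SigmaCone n d) ↔
      Uset n d f = {p : MvPolynomial (Fin n) ℝ | p.IsHomogeneous d} := by
  refine ⟨fun hint => ?_, fun hU => ?_⟩
  · refine Set.Subset.antisymm (fun p hp => hp.1) fun p hp => ?_
    exact (mem_Uset_iff hf hp).2 (exists_pos_sub_smul_mem_of_mem_interior hint _)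
  · have hUf : ∀ p (hp : p.IsHomogeneous d), ∃ c : ℝ, 0 < c ∧
        (⟨f, hf⟩ - c • ⟨p ^ 2, hp.sq⟩ : homogeneousSubmodule (Fin n) ℝ (2 * d)) ∈ SigmaCone n d :=
      fun p hp => (mem_Uset_iff hf hp).1 (hU ▸ hp)
    have hf_sos : IsSOSForm n d f := by
      obtain ⟨-, c, -, hc⟩ : (0 : MvPolynomial (Fin n) ℝ) ∈ Uset n d f :=
        hU ▸ isHomogeneous_zero _ _ _
      simpa using hc
    obtain ⟨b, hb⟩ := interior_sigmaCone_nonempty n d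
    obtain ⟨N, g, hg, hbg⟩ := interior_subset hb
    have hb_sum : b = ∑ i, ⟨g i ^ 2, (hg i).sq⟩ := Subtype.ext (by simpa using hbg)
    refine (sosCone n d).mem_interior_of_exists_pos_sub_smul_mem hb ?_
    rw [hb_sum]
    exact (sosCone n d).convex.exists_pos_sub_smul_sum_mem hf_sos _ _ fun i _ => hUf _ (hg i)

theorem strictly_sos_iff_Uset_eq (n d : ℕ) (f : MvPolynomial (Fin n) ℝ)
    (hsos : IsSOSForm n d f) (hf : f ∈ homogeneousSubmodule (Fin n) ℝ (2 * d)) :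
    (⟨f, hf⟩ : homogeneousSubmodule (Fin n) ℝ (2 * d)) ∈ interior (SigmaCone n d) ↔
      Uset n d f = {p : MvPolynomial (Fin n) ℝ | p.IsHomogeneous d} :=
  strictly_sos_iff_Uset_eq_general n d f hf
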